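/- arXiv:2202.01125 — 3 statements merged into one kernel-verified Lean document; each statement's English description precedes it below -/
import Mathlib

section
/- Let x_1, ..., x_{N+1} be distinct points in ℝ^n, let z_N be the IDW distance function built from x_1,...,x_N and z_{N+1} the one built from x_1,...,x_{N+1}. Then for every point x̃ ∈ ℝ^n not equal to any x_i, one has |z_N(x̃)| > |z_{N+1}(x̃)| > 0; equivalently z_N(x̃) < z_{N+1}(x̃) < 0. -/
theorem stmt_2 {n N : ℕ} (hN : 0 < N)
    (p : Fin (N + 1) → EuclideanSpace ℝ (Fin n)) (hp : Function.Injective p)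
    (zN zN1 : EuclideanSpace ℝ (Fin n) → ℝ)
    (hzN : ∀ x, (∀ i, x ≠ p i) →
      zN x = -(2 / Real.pi) *
        Real.arctan (1 / ∑ i : Fin N, (‖x - p i.castSucc‖ ^ 2)⁻¹))
    (hzN1 : ∀ x, (∀ i, x ≠ p i) →
      zN1 x = -(2 / Real.pi) *
        Real.arctan (1 / ∑ i : Fin (N + 1), (‖x - p i‖ ^ 2)⁻¹)) :
    ∀ x, (∀ i, x ≠ p i) → zN x < zN1 x ∧ zN1 x < 0 := by
  intro x hx
  rw [hzN x hx, hzN1 x hx]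
  have hterm : ∀ i : Fin (N + 1), 0 < (‖x - p i‖ ^ 2)⁻¹ := by
    intro i
    have h : 0 < ‖x - p i‖ := norm_pos_iff.mpr (sub_ne_zero.mpr (hx i))
    exact inv_pos.mpr (pow_pos h 2)
  set S : ℝ := ∑ i : Fin N, (‖x - p i.castSucc‖ ^ 2)⁻¹ with hS
  set S1 : ℝ := ∑ i : Fin (N + 1), (‖x - p i‖ ^ 2)⁻¹ with hS1
  have hSpos : 0 < S := by
    apply Finset.sum_pos (fun i _ => hterm i.castSucc)
    simpa using Finset.univ_nonempty_iff.mpr (Fin.pos_iff_nonempty.mp hN)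
  have hSS1 : S < S1 := by
    rw [hS1, Fin.sum_univ_castSucc]
    exact lt_add_of_pos_right _ (hterm (Fin.last N))
  have hS1pos : 0 < S1 := hSpos.trans hSS1
  have harctan : Real.arctan (1 / S1) < Real.arctan (1 / S) :=
    Real.arctan_strictMono (div_lt_div_of_pos_left one_pos hSpos hSS1)
  have hpi : 0 < 2 / Real.pi := by positivity
  constructor
  · have := mul_lt_mul_of_pos_left harctan hpi
    nlinarith
  · have h0 : 0 < Real.arctan (1 / S1) := by
      have := Real.arctan_strictMono (show (0:ℝ) < 1 / S1 by positivity)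
      simpa [Real.arctan_zero] using this
    nlinarith
end

section
/- Let x_1, x_2 ∈ ℝ^n with x_1 ≠ x_2, and let z_2 be the IDW distance function built from {x_1, x_2}. Then the midpoint x_μ = (x_1 + x_2)/2 is a stationary point of z_2, i.e. ∇z_2(x_μ) = 0. -/
open scoped Classical

/-!
The IDW distance function built from `x₁, x₂` is invariant under the point reflection through
the midpoint, which swaps `x₁` and `x₂`. Away from the data points it is differentiable, so its
derivative `D` at the midpoint, a fixed point of the reflection, satisfies `D = -D`.
-/

open Real

section Symmetric

variable {E F : Type*} [NormedAddCommGroup E] [NormedSpace ℝ E]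
  [NormedAddCommGroup F] [NormedSpace ℝ F]

theorem DifferentiableAt.hasFDerivAt_zero_of_symmetric {f : E → F} {a : E}
    (hf : DifferentiableAt ℝ f a) (hsymm : ∀ v, f (a - v) = f (a + v)) :
    HasFDerivAt f (0 : E →L[ℝ] F) a := by
  set D := fderiv ℝ f a
  have hreflect : f ∘ (fun x => a - (x - a)) = f := by
    funext x
    simp only [Function.comp, hsymm, add_sub_cancel]
  have hneg : HasFDerivAt f (-D) a := by
    have hfix : HasFDerivAt f D (a - (a - a)) := by simpa using hf.hasFDerivAt
    have hcomp : HasFDerivAt (f ∘ fun x => a - (x - a)) (D.comp (-.id ℝ E)) a :=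
      hfix.comp a (((hasFDerivAt_id a).sub_const a).const_sub a)
    rw [hreflect] at hcomp
    simpa using hcomp
  have hD : D = -D := hf.hasFDerivAt.unique hneg
  have hD0 : D = 0 := by linear_combination (norm := module) (1 / 2 : ℝ) • hD
  exact hD0 ▸ hf.hasFDerivAt

end Symmetric

theorem DifferentiableAt.hasGradientAt_zero_of_symmetric {E : Type*} [NormedAddCommGroup E]
    [InnerProductSpace ℝ E] [CompleteSpace E] {f : E → ℝ} {a : E}
    (hf : DifferentiableAt ℝ f a) (hsymm : ∀ v, f (a - v) = f (a + v)) :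
    HasGradientAt f 0 a := by
  rw [hasGradientAt_iff_hasFDerivAt, LinearIsometryEquiv.map_zero]
  exact hf.hasFDerivAt_zero_of_symmetric hsymm

noncomputable def idwDistance {E : Type*} [NormedAddCommGroup E] (x₁ x₂ x : E) : ℝ :=
  if x = x₁ ∨ x = x₂ then 0
  else -(2 / π) * arctan (1 / ((‖x - x₁‖ ^ 2)⁻¹ + (‖x - x₂‖ ^ 2)⁻¹))

section IDW

variable {E : Type*} [NormedAddCommGroup E]

theorem idwDistance_midpoint_sub_eq_add [Module ℝ E] (x₁ x₂ v : E) :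
    idwDistance x₁ x₂ (midpoint ℝ x₁ x₂ - v) = idwDistance x₁ x₂ (midpoint ℝ x₁ x₂ + v) := by
  set m := midpoint ℝ x₁ x₂
  have hswap₁ : m - v - x₁ = -(m + v - x₂) := by
    simp only [m, midpoint_eq_smul_add, invOf_eq_inv]; module
  have hswap₂ : m - v - x₂ = -(m + v - x₁) := by
    simp only [m, midpoint_eq_smul_add, invOf_eq_inv]; module
  have hnorm₁ : ‖m - v - x₁‖ = ‖m + v - x₂‖ := by rw [hswap₁, norm_neg]
  have hnorm₂ : ‖m - v - x₂‖ = ‖m + v - x₁‖ := by rw [hswap₂, norm_neg]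
  have hpt₁ : m - v = x₁ ↔ m + v = x₂ := by
    rw [← sub_eq_zero, hswap₁, neg_eq_zero, sub_eq_zero]
  have hpt₂ : m - v = x₂ ↔ m + v = x₁ := by
    rw [← sub_eq_zero, hswap₂, neg_eq_zero, sub_eq_zero]
  simp only [idwDistance, hnorm₁, hnorm₂, hpt₁, hpt₂, or_comm, add_comm]

theorem differentiableAt_idwDistance [InnerProductSpace ℝ E] {x₁ x₂ x : E}
    (h₁ : x ≠ x₁) (h₂ : x ≠ x₂) : DifferentiableAt ℝ (idwDistance x₁ x₂) x := by
  have hformula : (fun y => -(2 / π) * arctan (1 / ((‖y - x₁‖ ^ 2)⁻¹ + (‖y - x₂‖ ^ 2)⁻¹)))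
      =ᶠ[nhds x] idwDistance x₁ x₂ := by
    filter_upwards [isOpen_compl_singleton.mem_nhds h₁, isOpen_compl_singleton.mem_nhds h₂]
      with y (hy₁ : y ≠ x₁) (hy₂ : y ≠ x₂)
    rw [idwDistance, if_neg (not_or.mpr ⟨hy₁, hy₂⟩)]
  have hsq₁ : 0 < ‖x - x₁‖ ^ 2 := by positivity [sub_ne_zero.mpr h₁]
  have hsq₂ : 0 < ‖x - x₂‖ ^ 2 := by positivity [sub_ne_zero.mpr h₂]
  have hw₁ := ((differentiableAt_id.sub_const x₁).norm_sq ℝ).inv hsq₁.ne'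
  have hw₂ := ((differentiableAt_id.sub_const x₂).norm_sq ℝ).inv hsq₂.ne'
  refine hformula.differentiableAt_iff.mp ?_
  simp only [one_div]
  exact (((hw₁.add hw₂).inv (add_pos (inv_pos.2 hsq₁) (inv_pos.2 hsq₂)).ne').arctan).const_mul _

end IDW

theorem stmt_5 {n : ℕ} (x₁ x₂ : EuclideanSpace ℝ (Fin n)) (h : x₁ ≠ x₂)
    (z : EuclideanSpace ℝ (Fin n) → ℝ)
    (hz : ∀ x, z x = if x = x₁ ∨ x = x₂ then 0
        else -(2 / Real.pi) *
          Real.arctan (1 / ((‖x - x₁‖ ^ 2)⁻¹ + (‖x - x₂‖ ^ 2)⁻¹))) :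
    HasGradientAt z 0 ((1 / 2 : ℝ) • (x₁ + x₂)) := by
  -- `congr` reconciles the `Decidable` instances of the two `if`s.
  obtain rfl : z = idwDistance x₁ x₂ := funext fun x => by rw [hz, idwDistance]; congr
  rw [one_div, ← invOf_eq_inv, ← midpoint_eq_smul_add]
  refine DifferentiableAt.hasGradientAt_zero_of_symmetric ?_ (idwDistance_midpoint_sub_eq_add x₁ x₂)
  exact differentiableAt_idwDistance (mt (midpoint_eq_left_iff ℝ).mp h)
    (mt (midpoint_eq_right_iff ℝ).mp h)
end

section
/- Let Ω ⊆ ℝ^n be a compact set and ⟨x_i⟩_{i≥1} a sequence in Ω. Suppose there exists a strictly increasing sequence of positive integers ⟨i_t⟩_{t≥1} and a constant α ∈ (0,1] such that for every t, min_{1 ≤ i ≤ i_t - 1} ‖x_{i_t} - x_i‖ ≥ α · max_{x ∈ Ω} min_{1 ≤ i ≤ i_t - 1} ‖x - x_i‖. Then the set {x_i : i ≥ 1} is dense in Ω. -/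
theorem stmt_14 {n : ℕ} (Ω : Set (EuclideanSpace ℝ (Fin n)))
    (hcomp : IsCompact Ω)
    (x : ℕ → EuclideanSpace ℝ (Fin n)) (hx : ∀ i, x i ∈ Ω)
    (it : ℕ → ℕ) (hmono : StrictMono it) (hpos : ∀ t, 1 ≤ it t)
    (α : ℝ) (hα : α ∈ Set.Ioc (0 : ℝ) 1)
    (hcond : ∀ t, ∀ i, 1 ≤ i → i ≤ it t - 1 →
      α * sSup ((fun y => sInf ((fun j => ‖y - x j‖) '' Set.Icc 1 (it t - 1))) '' Ω)
        ≤ ‖x (it t) - x i‖) :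
    Ω ⊆ closure (Set.range x) := by
  intro y hy
  by_contra hyc
  -- extract a positive ε with dist y (x j) ≥ ε for all j
  rw [Metric.mem_closure_iff] at hyc
  push_neg at hyc
  obtain ⟨ε, hε, hfar⟩ := hyc
  have hfar' : ∀ j, ε ≤ ‖y - x j‖ := by
    intro j
    have := hfar (x j) ⟨j, rfl⟩
    simpa [dist_eq_norm] using this
  obtain ⟨hα0, hα1⟩ := hα
  -- bound on Ω
  obtain ⟨C, hC⟩ := hcomp.isBounded.exists_norm_le
  -- separation lemma
  have sep : ∀ s t : ℕ, s < t → α * ε ≤ ‖x (it t) - x (it s)‖ := by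
    intro s t hst
    have hslt : it s < it t := hmono hst
    have h2 : 2 ≤ it t := lt_of_le_of_lt (hpos s) hslt
    have hne : (Set.Icc 1 (it t - 1)).Nonempty := ⟨1, le_refl _, by omega⟩
    have key := hcond t (it s) (hpos s) (by omega)
    refine le_trans ?_ key
    apply mul_le_mul_of_nonneg_left _ hα0.le
    -- ε ≤ sSup of image
    have hmem : sInf ((fun j => ‖y - x j‖) '' Set.Icc 1 (it t - 1)) ∈
        (fun y => sInf ((fun j => ‖y - x j‖) '' Set.Icc 1 (it t - 1))) '' Ω :=
      ⟨y, hy, rfl⟩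
    have hbdd : BddAbove ((fun y => sInf ((fun j => ‖y - x j‖) '' Set.Icc 1 (it t - 1))) '' Ω) := by
      refine ⟨C + ‖x 1‖, ?_⟩
      rintro _ ⟨z, hz, rfl⟩
      have h1 : ‖z - x 1‖ ∈ (fun j => ‖z - x j‖) '' Set.Icc 1 (it t - 1) :=
        ⟨1, ⟨le_refl _, by omega⟩, rfl⟩
      have hbb : BddBelow ((fun j => ‖z - x j‖) '' Set.Icc 1 (it t - 1)) := by
        refine ⟨0, ?_⟩
        rintro _ ⟨j, _, rfl⟩
        exact norm_nonneg _
      calc sInf ((fun j => ‖z - x j‖) '' Set.Icc 1 (it t - 1)) ≤ ‖z - x 1‖ := csInf_le hbb h1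
        _ ≤ ‖z‖ + ‖x 1‖ := norm_sub_le _ _
        _ ≤ C + ‖x 1‖ := by linarith [hC z hz]
    refine le_trans ?_ (le_csSup hbdd hmem)
    apply le_csInf (hne.image _)
    rintro _ ⟨j, _, rfl⟩
    exact hfar' j
  -- extract convergent subsequence of (x ∘ it)
  obtain ⟨a, -, φ, hφ, hconv⟩ := hcomp.tendsto_subseq (fun t => hx (it t))
  rw [Metric.tendsto_atTop] at hconv
  obtain ⟨N, hN⟩ := hconv (α * ε / 2) (by positivity)
  have h1 := hN N (le_refl _)
  have h2 := hN (N + 1) (Nat.le_succ _)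
  have hlt : φ N < φ (N + 1) := hφ (Nat.lt_succ_self _)
  have := sep (φ N) (φ (N + 1)) hlt
  have hd : dist (x (it (φ (N + 1)))) (x (it (φ N))) < α * ε := by
    calc dist (x (it (φ (N + 1)))) (x (it (φ N)))
        ≤ dist (x (it (φ (N + 1)))) a + dist a (x (it (φ N))) := dist_triangle _ _ _
      _ < α * ε / 2 + α * ε / 2 := by
          rw [dist_comm a]
          exact add_lt_add h2 h1
      _ = α * ε := by ring
  rw [dist_eq_norm] at hd
  linarith
end
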